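/- Let N ≥ 2 and let h_A, h_B : [0,1] → ℝ be given by h_A(x) = x·√(2·log(1/x)) for x ∈ (0,1] with h_A(0) = 0, and h_B(x) = x·√(2·log(1/x)) − √(π/2)·erf(√(log(1/x))) + x·(N−1)·√(π/2) for x ∈ (0,1] with h_B(0) = −√(π/2). Set H_A(w) = Σ_{i=1}^N h_A(w_i) and H_B(w) = Σ_{i=1}^N h_B(w_i). Then for every w in the probability simplex Δ_N, every subset S ⊆ [N] with |S| = N₀ ≥ 1, and every p ∈ (0,1): 0 ≤ H_B(w) ≤ H_A(w) ≤ √(2·log N₀) + (1/√(e·(1−p)))·Σ_{i∉S} w_i^p + 𝟙{N₀ = 1}·√2·Σ_{i∉S} √(w_i). -/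

import Mathlib

/-- The error function `erf(z) = (2/√π)∫_0^z e^{-u²} du`. -/
noncomputable def erf (z : ℝ) : ℝ :=
  2 / Real.sqrt Real.pi * ∫ u in (0 : ℝ)..z, Real.exp (-u ^ 2)

/-- `h_A(x) = x·√(2·log(1/x))` for `x ∈ (0,1]`, with `h_A(0) = 0`. -/
noncomputable def hA (x : ℝ) : ℝ :=
  if x = 0 then 0 else x * Real.sqrt (2 * Real.log (1 / x))

/-- `h_B(x) = x·√(2·log(1/x)) − √(π/2)·erf(√(log(1/x))) + x·(N−1)·√(π/2)` for `x ∈ (0,1]`,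
with `h_B(0) = −√(π/2)`. -/
noncomputable def hB (N : ℕ) (x : ℝ) : ℝ :=
  if x = 0 then -Real.sqrt (Real.pi / 2)
  else x * Real.sqrt (2 * Real.log (1 / x))
    - Real.sqrt (Real.pi / 2) * erf (Real.sqrt (Real.log (1 / x)))
    + x * ((N : ℝ) - 1) * Real.sqrt (Real.pi / 2)

noncomputable def HA {N : ℕ} (w : Fin N → ℝ) : ℝ := ∑ i, hA (w i)

noncomputable def HB {N : ℕ} (w : Fin N → ℝ) : ℝ := ∑ i, hB N (w i)

/-!
Write `x = exp (-t ^ 2)` with `t = √(log (1 / x)) ≥ 0`. Then `h_A(x) = √2 · t · x` and `h_B` is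
expressed through `erfc = 1 - erf`. Shifting
`∫_t^∞ exp (-u²) du = exp (-t²) ∫_0^∞ exp (-v²) exp (-2tv) dv` and using
`1 - 2tv ≤ exp (-2tv) ≤ 1` gives `exp (-t²) (1 - 2t/√π) ≤ erfc t ≤ exp (-t²)`, which is
exactly `√(π/2) (N x - 1) ≤ h_B(x) ≤ h_A(x) - √(π/2) (1 - N x)`; the affine terms sum to zero on
the simplex.

For the upper bound split `H_A` over `S` and `Sᶜ`. Off `S`, `x^(1-p) √(2 log (1/x)) ≤ 1/√(e(1-p))`
since `y e^(-y) ≤ 1/e`. On `S`, `h_A(x) = √x · √(2 · negMulLog x)`; Cauchy–Schwarz and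
`Σ_S negMulLog w_i ≤ s log N₀ + 1 - s` (with `s = Σ_S w_i`, from `negMulLog y ≤ 1 - y` at
`y = N₀ w_i`) bound the sum by `√(2 s (s log N₀ + 1 - s)) ≤ √(2 log N₀)` once `log N₀ ≥ 1/2`.
For `N₀ = 1` instead `h_A(x) ≤ √2 √(1 - x)` and `√` is subadditive.
-/

open Real MeasureTheory Set

noncomputable def erfc (t : ℝ) : ℝ := 1 - erf t

lemma integrable_exp_neg_sq : Integrable fun x : ℝ => exp (-x ^ 2) := by
  simpa using integrable_exp_neg_mul_sq one_pos

lemma integrable_mul_exp_neg_sq : Integrable fun x : ℝ => x * exp (-x ^ 2) := by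
  simpa using integrable_mul_exp_neg_mul_sq one_pos

lemma integral_Ioi_zero_exp_neg_sq : ∫ x in Ioi (0 : ℝ), exp (-x ^ 2) = √π / 2 := by
  simpa using integral_gaussian_Ioi 1

lemma integral_Ioi_zero_mul_exp_neg_sq : ∫ x in Ioi (0 : ℝ), x * exp (-x ^ 2) = 1 / 2 := by
  have h := integral_mul_cexp_neg_mul_sq (b := 1) (by simp)
  rw [← Complex.ofReal_inj, ← integral_complex_ofReal]
  convert h using 1 <;> push_cast <;> simp

lemma erfc_eq_integral_Ioi (t : ℝ) : erfc t = 2 / √π * ∫ x in Ioi t, exp (-x ^ 2) := by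
  have hsplit := intervalIntegral.integral_Ioi_sub_Ioi' (a := 0) (b := t)
    integrable_exp_neg_sq.integrableOn integrable_exp_neg_sq.integrableOn
  rw [integral_Ioi_zero_exp_neg_sq] at hsplit
  have : √π ≠ 0 := (sqrt_pos.2 pi_pos).ne'
  rw [erfc, erf, ← hsplit]
  field_simp
  ring

lemma integral_Ioi_exp_neg_sq_eq_shift (t : ℝ) :
    ∫ x in Ioi t, exp (-x ^ 2) = ∫ v in Ioi (0 : ℝ), exp (-(v + t) ^ 2) := by
  rw [← (measurePreserving_add_right volume t).setIntegral_preimage_emb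
    (measurableEmbedding_addRight t)]
  congr 1
  ext v
  simp

lemma erfc_le_exp_neg_sq {t : ℝ} (ht : 0 ≤ t) : erfc t ≤ exp (-t ^ 2) := by
  have hshift : ∫ x in Ioi t, exp (-x ^ 2) ≤ ∫ v in Ioi (0 : ℝ), exp (-t ^ 2) * exp (-v ^ 2) := by
    rw [integral_Ioi_exp_neg_sq_eq_shift]
    refine setIntegral_mono_on (integrable_exp_neg_sq.comp_add_right t).integrableOn
      (integrable_exp_neg_sq.const_mul _).integrableOn measurableSet_Ioi fun v hv => ?_
    rw [← exp_add]
    exact exp_le_exp.2 (by nlinarith [mem_Ioi.1 hv])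
  rw [integral_const_mul, integral_Ioi_zero_exp_neg_sq] at hshift
  rw [erfc_eq_integral_Ioi]
  have hπ : 0 < √π := sqrt_pos.2 pi_pos
  calc 2 / √π * ∫ x in Ioi t, exp (-x ^ 2) ≤ 2 / √π * (exp (-t ^ 2) * (√π / 2)) := by gcongr
    _ = exp (-t ^ 2) := by field_simp

lemma exp_neg_sq_mul_le_erfc (t : ℝ) : exp (-t ^ 2) * (1 - 2 * t / √π) ≤ erfc t := by
  have hshift : ∫ v in Ioi (0 : ℝ), exp (-t ^ 2) * (exp (-v ^ 2) - 2 * t * (v * exp (-v ^ 2)))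
      ≤ ∫ x in Ioi t, exp (-x ^ 2) := by
    rw [integral_Ioi_exp_neg_sq_eq_shift]
    refine setIntegral_mono_on ((integrable_exp_neg_sq.sub
      (integrable_mul_exp_neg_sq.const_mul (2 * t))).const_mul _).integrableOn
      (integrable_exp_neg_sq.comp_add_right t).integrableOn measurableSet_Ioi fun v _ => ?_
    have hexp := add_one_le_exp (-(2 * t * v))
    calc exp (-t ^ 2) * (exp (-v ^ 2) - 2 * t * (v * exp (-v ^ 2)))
        = exp (-t ^ 2) * exp (-v ^ 2) * (-(2 * t * v) + 1) := by ring
      _ ≤ exp (-t ^ 2) * exp (-v ^ 2) * exp (-(2 * t * v)) := by gcongr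
      _ = exp (-(v + t) ^ 2) := by rw [← exp_add, ← exp_add]; ring_nf
  rw [integral_const_mul, integral_sub integrable_exp_neg_sq.integrableOn
    (integrable_mul_exp_neg_sq.const_mul _).integrableOn, integral_const_mul,
    integral_Ioi_zero_exp_neg_sq, integral_Ioi_zero_mul_exp_neg_sq] at hshift
  rw [erfc_eq_integral_Ioi]
  have hπ : 0 < √π := sqrt_pos.2 pi_pos
  calc exp (-t ^ 2) * (1 - 2 * t / √π) = 2 / √π * (exp (-t ^ 2) * (√π / 2 - 2 * t * (1 / 2))) := by
        field_simp
    _ ≤ 2 / √π * ∫ x in Ioi t, exp (-x ^ 2) := by gcongr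

lemma hA_eq (x : ℝ) : hA x = x * √(2 * log (1 / x)) := by
  unfold hA
  split_ifs with h <;> simp [h]

lemma hA_eq_sqrt {x : ℝ} (hx : 0 ≤ x) : hA x = √(2 * x * negMulLog x) := by
  rw [hA_eq, ← sqrt_sq hx, ← sqrt_mul (sq_nonneg x), sqrt_sq hx, negMulLog, one_div, log_inv]
  ring_nf

lemma exists_exp_neg_sq_eq {x : ℝ} (h0 : 0 < x) (h1 : x ≤ 1) : ∃ t, 0 ≤ t ∧ exp (-t ^ 2) = x :=
  ⟨√(-log x), sqrt_nonneg _, by rw [sq_sqrt (neg_nonneg.2 (log_nonpos h0.le h1)), neg_neg,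
    exp_log h0]⟩

lemma hA_exp_neg_sq {t : ℝ} (ht : 0 ≤ t) : hA (exp (-t ^ 2)) = √2 * t * exp (-t ^ 2) := by
  rw [hA_eq, one_div, log_inv, log_exp, neg_neg, sqrt_mul zero_le_two, sqrt_sq ht]
  ring

lemma hB_exp_neg_sq (N : ℕ) {t : ℝ} (ht : 0 ≤ t) :
    hB N (exp (-t ^ 2)) = √2 * t * exp (-t ^ 2) - √(π / 2) * (1 - erfc t)
      + exp (-t ^ 2) * (N - 1) * √(π / 2) := by
  rw [← hA_exp_neg_sq ht, hA_eq, hB, if_neg (exp_pos _).ne', erfc, sub_sub_cancel, one_div,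
    log_inv, log_exp, neg_neg, sqrt_sq ht]

lemma sqrt_pi_div_two_mul_two_div_sqrt_pi : √(π / 2) * (2 / √π) = √2 := by
  have hπ : 0 < √π := sqrt_pos.2 pi_pos
  rw [sqrt_div pi_pos.le]
  field_simp
  rw [sq_sqrt zero_le_two]

lemma sqrt_pi_div_two_mul_le_hB (N : ℕ) {x : ℝ} (hx : x ∈ Icc 0 1) :
    √(π / 2) * (N * x - 1) ≤ hB N x := by
  rcases hx.1.eq_or_lt with rfl | h0
  · simp [hB]
  obtain ⟨t, ht, rfl⟩ := exists_exp_neg_sq_eq h0 hx.2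
  have h := mul_le_mul_of_nonneg_left (exp_neg_sq_mul_le_erfc t) (sqrt_nonneg (π / 2))
  have hc := sqrt_pi_div_two_mul_two_div_sqrt_pi
  rw [hB_exp_neg_sq N ht]
  linear_combination h + t * exp (-t ^ 2) * hc

lemma hB_add_le_hA (N : ℕ) {x : ℝ} (hx : x ∈ Icc 0 1) :
    hB N x + √(π / 2) * (1 - N * x) ≤ hA x := by
  rcases hx.1.eq_or_lt with rfl | h0
  · simp [hA, hB]
  obtain ⟨t, ht, rfl⟩ := exists_exp_neg_sq_eq h0 hx.2
  have h := mul_le_mul_of_nonneg_left (erfc_le_exp_neg_sq ht) (sqrt_nonneg (π / 2))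
  rw [hB_exp_neg_sq N ht, hA_exp_neg_sq ht]
  linear_combination h

lemma HB_nonneg {N : ℕ} {w : Fin N → ℝ} (hw : w ∈ stdSimplex ℝ (Fin N)) : 0 ≤ HB w :=
  calc 0 = ∑ i, √(π / 2) * ((N : ℝ) * w i - 1) := by
        rw [← Finset.mul_sum]
        simp [Finset.sum_sub_distrib, ← Finset.mul_sum, hw.2]
    _ ≤ HB w := Finset.sum_le_sum fun i _ =>
        sqrt_pi_div_two_mul_le_hB N (mem_Icc_of_mem_stdSimplex hw i)

lemma HB_le_HA {N : ℕ} {w : Fin N → ℝ} (hw : w ∈ stdSimplex ℝ (Fin N)) : HB w ≤ HA w :=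
  calc HB w = ∑ i, (hB N (w i) + √(π / 2) * (1 - N * w i)) := by
        rw [Finset.sum_add_distrib, ← Finset.mul_sum]
        simp [HB, Finset.sum_sub_distrib, ← Finset.mul_sum, hw.2]
    _ ≤ HA w := Finset.sum_le_sum fun i _ => hB_add_le_hA N (mem_Icc_of_mem_stdSimplex hw i)

lemma rpow_mul_sqrt_two_mul_neg_log_le {x q : ℝ} (hx : 0 < x) (hq : 0 < q) :
    x ^ q * √(2 * -log x) ≤ 1 / √(exp 1 * q) := by
  have hsq : x ^ q * √(2 * -log x) = √(-2 * q * log x * exp (-(-2 * q * log x)) / q) := by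
    rw [← sqrt_sq (rpow_nonneg hx.le q), ← sqrt_mul (sq_nonneg _), rpow_def_of_pos hx,
      ← exp_nat_mul]
    congr 1
    field_simp
    ring_nf
  calc x ^ q * √(2 * -log x) = √(-2 * q * log x * exp (-(-2 * q * log x)) / q) := hsq
    _ ≤ √(exp (-1) / q) := by gcongr; exact mul_exp_neg_le_exp_neg_one _
    _ = 1 / √(exp 1 * q) := by
        rw [exp_neg, ← one_div, div_div, sqrt_div' _ (by positivity), sqrt_one]

lemma hA_le_mul_rpow {x p : ℝ} (hx : 0 ≤ x) (hp : p < 1) :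
    hA x ≤ 1 / √(exp 1 * (1 - p)) * x ^ p := by
  rcases hx.eq_or_lt with rfl | h0
  · simp only [hA, if_true]
    positivity
  calc hA x = x ^ p * (x ^ (1 - p) * √(2 * -log x)) := by
        rw [hA_eq, one_div, log_inv, ← mul_assoc, ← rpow_add h0, add_sub_cancel, rpow_one]
    _ ≤ x ^ p * (1 / √(exp 1 * (1 - p))) := by
        gcongr
        exact rpow_mul_sqrt_two_mul_neg_log_le h0 (sub_pos.2 hp)
    _ = 1 / √(exp 1 * (1 - p)) * x ^ p := mul_comm _ _

lemma hA_le_sqrt_two_mul_sqrt_one_sub {x : ℝ} (hx : x ∈ Icc 0 1) : hA x ≤ √2 * √(1 - x) := by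
  rw [hA_eq_sqrt hx.1, ← sqrt_mul zero_le_two]
  gcongr
  · exact negMulLog_nonneg hx.1 hx.2
  · linarith [hx.2]
  · exact negMulLog_le_one_sub_self hx.1

lemma sqrt_sum_le_sum_sqrt {ι : Type*} (s : Finset ι) {f : ι → ℝ} (hf : ∀ i ∈ s, 0 ≤ f i) :
    √(∑ i ∈ s, f i) ≤ ∑ i ∈ s, √(f i) := by
  rw [sqrt_le_left (Finset.sum_nonneg fun i _ => sqrt_nonneg _)]
  calc ∑ i ∈ s, f i = ∑ i ∈ s, √(f i) ^ 2 :=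
        Finset.sum_congr rfl fun i hi => (sq_sqrt (hf i hi)).symm
    _ ≤ (∑ i ∈ s, √(f i)) ^ 2 := Finset.sum_sq_le_sq_sum_of_nonneg fun i _ => sqrt_nonneg _

lemma negMulLog_le_mul_log_add {x n : ℝ} (hx : 0 ≤ x) (hn : 0 < n) :
    negMulLog x ≤ x * log n + (1 / n - x) := by
  have h := negMulLog_le_one_sub_self (mul_nonneg hn.le hx)
  rw [negMulLog_mul, negMulLog] at h
  rw [← mul_le_mul_iff_right₀ hn]
  field_simp
  linarith

lemma sum_hA_le_sqrt_two_mul_log_card {ι : Type*} (S : Finset ι) {w : ι → ℝ}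
    (hw0 : ∀ i ∈ S, 0 ≤ w i) (hw1 : ∑ i ∈ S, w i ≤ 1) (hS : 2 ≤ S.card) :
    ∑ i ∈ S, hA (w i) ≤ √(2 * log S.card) := by
  set s := ∑ i ∈ S, w i
  set c := log S.card
  have hs0 : 0 ≤ s := Finset.sum_nonneg hw0
  have hc : 1 / 2 ≤ c := by
    have : log 2 ≤ c := log_le_log two_pos (by exact_mod_cast hS)
    linarith [log_two_gt_d9]
  have hentropy : ∑ i ∈ S, negMulLog (w i) ≤ s * c + (1 - s) := by
    have hcard : (0 : ℝ) < S.card := by positivity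
    calc ∑ i ∈ S, negMulLog (w i) ≤ ∑ i ∈ S, (w i * c + (1 / S.card - w i)) :=
          Finset.sum_le_sum fun i hi => negMulLog_le_mul_log_add (hw0 i hi) hcard
      _ = s * c + (1 - s) := by
          rw [Finset.sum_add_distrib, Finset.sum_sub_distrib, ← Finset.sum_mul, Finset.sum_const,
            nsmul_eq_mul, mul_one_div_cancel hcard.ne']
  have hcauchy : ∑ i ∈ S, hA (w i) ≤ √s * √(2 * ∑ i ∈ S, negMulLog (w i)) := by
    have hw : ∀ i ∈ S, w i ≤ 1 := fun i hi => (Finset.single_le_sum hw0 hi).trans hw1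
    calc ∑ i ∈ S, hA (w i) = ∑ i ∈ S, √(w i) * √(2 * negMulLog (w i)) :=
          Finset.sum_congr rfl fun i hi => by
            rw [hA_eq_sqrt (hw0 i hi), mul_comm 2 (w i), mul_assoc, sqrt_mul (hw0 i hi)]
      _ ≤ √(∑ i ∈ S, √(w i) ^ 2) * √(∑ i ∈ S, √(2 * negMulLog (w i)) ^ 2) :=
          Real.sum_mul_le_sqrt_mul_sqrt _ _ _
      _ = √s * √(2 * ∑ i ∈ S, negMulLog (w i)) := by
          rw [Finset.mul_sum]
          congr 2 <;> refine Finset.sum_congr rfl fun i hi => sq_sqrt ?_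
          · exact hw0 i hi
          · exact mul_nonneg zero_le_two (negMulLog_nonneg (hw0 i hi) (hw i hi))
  calc ∑ i ∈ S, hA (w i) ≤ √s * √(2 * ∑ i ∈ S, negMulLog (w i)) := hcauchy
    _ ≤ √s * √(2 * (s * c + (1 - s))) := by gcongr
    _ = √(2 * (s * (s * c + (1 - s)))) := by rw [← sqrt_mul hs0]; ring_nf
    _ ≤ √(2 * c) := by
        gcongr
        nlinarith [mul_nonneg (mul_nonneg (sub_nonneg.2 hw1) (by linarith : 0 ≤ 1 + s))
          (sub_nonneg.2 hc)]

lemma sum_hA_le_of_mem_stdSimplex {ι : Type*} [Fintype ι] [DecidableEq ι] {w : ι → ℝ} (hw : w ∈ stdSimplex ℝ ι)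
    (S : Finset ι) :
    ∑ i ∈ S, hA (w i) ≤ √(2 * log S.card)
      + (if S.card = 1 then 1 else 0) * √2 * ∑ i ∈ Sᶜ, √(w i) := by
  obtain hS | hS | hS : S.card = 0 ∨ S.card = 1 ∨ 2 ≤ S.card := by omega
  · simp [Finset.card_eq_zero.1 hS]
  · obtain ⟨j, rfl⟩ := Finset.card_eq_one.1 hS
    have hrest : 1 - w j = ∑ i ∈ {j}ᶜ, w i := by
      rw [← hw.2, ← Finset.sum_add_sum_compl {j} w, Finset.sum_singleton, add_sub_cancel_left]
    calc ∑ i ∈ {j}, hA (w i) = hA (w j) := Finset.sum_singleton _ _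
      _ ≤ √2 * √(1 - w j) := hA_le_sqrt_two_mul_sqrt_one_sub (mem_Icc_of_mem_stdSimplex hw j)
      _ ≤ √2 * ∑ i ∈ {j}ᶜ, √(w i) := by
          rw [hrest]
          gcongr
          exact sqrt_sum_le_sum_sqrt _ fun i _ => hw.1 i
      _ ≤ _ := by simp
  · have hsum : ∑ i ∈ S, w i ≤ 1 :=
      hw.2 ▸ Finset.sum_le_sum_of_subset_of_nonneg (Finset.subset_univ S) fun i _ _ => hw.1 i
    rw [if_neg (by omega), zero_mul, zero_mul, add_zero]
    exact sum_hA_le_sqrt_two_mul_log_card S (fun i _ => hw.1 i) hsum hS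

theorem stmt12_general (N : ℕ) (w : Fin N → ℝ) (hw : w ∈ stdSimplex ℝ (Fin N))
    (S : Finset (Fin N)) (N₀ : ℕ) (hS : S.card = N₀)
    (p : ℝ) (hp : p ∈ Set.Ioo (0 : ℝ) 1) :
    0 ≤ HB w ∧ HB w ≤ HA w ∧
      HA w ≤ Real.sqrt (2 * Real.log N₀)
        + 1 / Real.sqrt (Real.exp 1 * (1 - p)) * ∑ i ∈ Sᶜ, w i ^ p
        + (if N₀ = 1 then 1 else 0) * Real.sqrt 2 * ∑ i ∈ Sᶜ, Real.sqrt (w i) := by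
  subst hS
  refine ⟨HB_nonneg hw, HB_le_HA hw, ?_⟩
  have hcompl : ∑ i ∈ Sᶜ, hA (w i) ≤ 1 / √(exp 1 * (1 - p)) * ∑ i ∈ Sᶜ, w i ^ p := by
    rw [Finset.mul_sum]
    exact Finset.sum_le_sum fun i _ => hA_le_mul_rpow (hw.1 i) hp.2
  rw [HA, ← Finset.sum_add_sum_compl S]
  linarith [sum_hA_le_of_mem_stdSimplex hw S]

/-- for every `w` in the probability simplex `Δ_N` (`N ≥ 2`), every
`S ⊆ [N]` with `|S| = N₀ ≥ 1`, and every `p ∈ (0,1)`: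
`0 ≤ H_B(w) ≤ H_A(w) ≤ √(2·log N₀) + (1/√(e(1−p)))·Σ_{i∉S} w_iᵖ
  + 𝟙{N₀ = 1}·√2·Σ_{i∉S} √(w_i)`. -/
theorem stmt12 (N : ℕ) (hN : 2 ≤ N) (w : Fin N → ℝ) (hw : w ∈ stdSimplex ℝ (Fin N))
    (S : Finset (Fin N)) (N₀ : ℕ) (hS : S.card = N₀) (hN₀ : 1 ≤ N₀)
    (p : ℝ) (hp : p ∈ Set.Ioo (0 : ℝ) 1) :
    0 ≤ HB w ∧ HB w ≤ HA w ∧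
      HA w ≤ Real.sqrt (2 * Real.log N₀)
        + 1 / Real.sqrt (Real.exp 1 * (1 - p)) * ∑ i ∈ Sᶜ, w i ^ p
        + (if N₀ = 1 then 1 else 0) * Real.sqrt 2 * ∑ i ∈ Sᶜ, Real.sqrt (w i) :=
  stmt12_general N w hw S N₀ hS p hp
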